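/- arXiv:0903.4626 — 2 statements merged into one kernel-verified Lean document; each statement's English description precedes it below -/
import Mathlib

section
/- Let p, q be real polynomials in two variables with orders o(p) > 1, o(q) > 1 satisfying max{deg(p), deg(q)} < o(p) + o(q) − 1. If T + D ≡ 0, where T = ∂p/∂x + ∂q/∂y and D = (∂p/∂x)(∂q/∂y) − (∂p/∂y)(∂q/∂x), then T ≡ 0 and D ≡ 0. -/
open MvPolynomial

/-- The order of a polynomial: minimal total degree of a monomial occurring in it. -/
noncomputable def order (p : MvPolynomial (Fin 2) ℝ) : ℕ :=
  sInf ((fun m : Fin 2 →₀ ℕ => m 0 + m 1) '' p.support)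

/-!
Every monomial of `T = ∂ₓp + ∂ᵧq` has degree at most `max (deg p) (deg q) - 1`, while every
monomial of `D = ∂ₓp ∂ᵧq - ∂ᵧp ∂ₓq` has degree at least `o(p) + o(q) - 2`. Under the degree
hypothesis these ranges are disjoint, so `T` and `D` share no monomial and `T + D = 0` forces
both to vanish.
-/

namespace MvPolynomial

variable {σ R : Type*} [CommSemiring R]

theorem eq_zero_and_eq_zero_of_add_eq_zero_of_disjoint_support {f g : MvPolynomial σ R}
    (h : f + g = 0) (hd : Disjoint f.support g.support) : f = 0 ∧ g = 0 := by
  have hf : f = 0 := by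
    ext m
    by_contra hm
    have hg : coeff m g = 0 :=
      notMem_support_iff.1 (Finset.disjoint_left.1 hd (mem_support_iff.2 hm))
    exact hm (by simpa [hg] using congrArg (coeff m) h)
  exact ⟨hf, by simpa [hf] using h⟩

theorem add_single_mem_support_of_mem_support_pderiv {p : MvPolynomial σ R} {i : σ}
    {m : σ →₀ ℕ} (h : m ∈ (pderiv i p).support) : m + Finsupp.single i 1 ∈ p.support := by
  rw [mem_support_iff, coeff_pderiv] at h
  exact mem_support_iff.2 (left_ne_zero_of_mul h)

theorem degree_add_one_le_totalDegree_of_mem_support_pderiv {p : MvPolynomial σ R} {i : σ}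
    {m : σ →₀ ℕ} (h : m ∈ (pderiv i p).support) : m.degree + 1 ≤ p.totalDegree := by
  have : (m + Finsupp.single i 1).degree ≤ p.totalDegree :=
    le_totalDegree (add_single_mem_support_of_mem_support_pderiv h)
  rwa [map_add, Finsupp.degree_single] at this

theorem degree_add_one_le_of_mem_support_pderiv_add_pderiv {p q : MvPolynomial σ R} {i j : σ}
    {m : σ →₀ ℕ} (h : m ∈ (pderiv i p + pderiv j q).support) :
    m.degree + 1 ≤ max p.totalDegree q.totalDegree := by
  classical
  rcases Finset.mem_union.1 (support_add h) with hp | hq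
  · exact (degree_add_one_le_totalDegree_of_mem_support_pderiv hp).trans (le_max_left _ _)
  · exact (degree_add_one_le_totalDegree_of_mem_support_pderiv hq).trans (le_max_right _ _)

theorem add_le_degree_of_mem_support_mul {f g : MvPolynomial σ R} {a b : ℕ}
    (hf : ∀ n ∈ f.support, a ≤ n.degree) (hg : ∀ n ∈ g.support, b ≤ n.degree)
    {m : σ →₀ ℕ} (hm : m ∈ (f * g).support) : a + b ≤ m.degree := by
  classical
  obtain ⟨u, hu, v, hv, rfl⟩ := Finset.mem_add.1 (support_mul f g hm)
  rw [map_add]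
  exact add_le_add (hf u hu) (hg v hv)

end MvPolynomial

theorem order_le_degree_of_mem_support {p : MvPolynomial (Fin 2) ℝ} {n : Fin 2 →₀ ℕ}
    (h : n ∈ p.support) : order p ≤ n.degree := by
  rw [Finsupp.degree_eq_sum, Fin.sum_univ_two]
  exact Nat.sInf_le ⟨n, h, rfl⟩

theorem order_le_degree_add_one_of_mem_support_pderiv {p : MvPolynomial (Fin 2) ℝ} {i : Fin 2}
    {m : Fin 2 →₀ ℕ} (h : m ∈ (pderiv i p).support) : order p ≤ m.degree + 1 := by
  simpa using order_le_degree_of_mem_support (add_single_mem_support_of_mem_support_pderiv h)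

theorem order_add_order_le_degree_add_two_of_mem_support_jacobian_det
    {p q : MvPolynomial (Fin 2) ℝ} (hp : 1 ≤ order p) (hq : 1 ≤ order q) {m : Fin 2 →₀ ℕ}
    (h : m ∈ (pderiv 0 p * pderiv 1 q - pderiv 1 p * pderiv 0 q).support) :
    order p + order q ≤ m.degree + 2 := by
  have hprod : ∀ i j : Fin 2, ∀ m ∈ (pderiv i p * pderiv j q).support,
      order p - 1 + (order q - 1) ≤ m.degree := fun i j _ =>
    add_le_degree_of_mem_support_mul
      (fun _ hn => Nat.sub_le_of_le_add (order_le_degree_add_one_of_mem_support_pderiv hn))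
      (fun _ hn => Nat.sub_le_of_le_add (order_le_degree_add_one_of_mem_support_pderiv hn))
  rcases Finset.mem_union.1 (support_sub _ _ _ h) with h | h
  · have := hprod 0 1 m h; omega
  · have := hprod 1 0 m h; omega

theorem stmt2 (p q : MvPolynomial (Fin 2) ℝ)
    (hp : 1 < order p) (hq : 1 < order q)
    (hdeg : max p.totalDegree q.totalDegree + 1 < order p + order q)
    (hTD : (pderiv 0 p + pderiv 1 q) +
      (pderiv 0 p * pderiv 1 q - pderiv 1 p * pderiv 0 q) = 0) :
    pderiv 0 p + pderiv 1 q = 0 ∧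
      pderiv 0 p * pderiv 1 q - pderiv 1 p * pderiv 0 q = 0 := by
  refine eq_zero_and_eq_zero_of_add_eq_zero_of_disjoint_support hTD
    (Finset.disjoint_left.2 fun m hT hD => ?_)
  have hT := degree_add_one_le_of_mem_support_pderiv_add_pderiv hT
  have hD := order_add_order_le_degree_add_two_of_mem_support_jacobian_det hp.le hq.le hD
  omega
end

section
/- Suppose the planar Jacobian conjecture for global asymptotic stability holds in the following form: any C¹ map F : ℝ² → ℝ² with F(0)=0 whose Jacobian matrix at every point has eigenvalues with negative real part is injective. Let Φ*(u,v) = (u + p*(u,v), v + q*(u,v)) be a polynomial map with constant Jacobian determinant, o(p*) > 1, o(q*) > 1, and ∂p*/∂u + ∂q*/∂v ≥ 0 everywhere. Then Φ* is injective. -/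
/-!
Since all monomials of `p` and `q` have degree at least two, the Jacobian of
`Φ = (u + p, v + q)` is the identity at the origin, so its constant determinant is `1`.
Hence `-J_Φ` has determinant `1` and trace `-2 - (∂p/∂u + ∂q/∂v) ≤ -2` everywhere, which forces
both of its eigenvalues into the open left half-plane. The assumed global asymptotic stability
criterion therefore makes `-Φ`, and with it `Φ`, injective.
-/

open MvPolynomial

/-- The Jacobian matrix of a map F : ℝ² → ℝ² at a point, via the Fréchet derivative. -/
noncomputable def jacMatrix (F : (Fin 2 → ℝ) → (Fin 2 → ℝ)) (x : Fin 2 → ℝ) :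
    Matrix (Fin 2) (Fin 2) ℝ :=
  fun i j => fderiv ℝ F x (Pi.single j 1) i

namespace MvPolynomial

section Calculus

variable {σ 𝕜 : Type*} [Fintype σ] [NontriviallyNormedField 𝕜]

theorem hasFDerivAt_eval (r : MvPolynomial σ 𝕜) (x : σ → 𝕜) :
    HasFDerivAt (eval · r)
      (∑ i, eval x (pderiv i r) • ContinuousLinearMap.proj (R := 𝕜) (φ := fun _ : σ => 𝕜) i) x := by
  classical
  induction r using MvPolynomial.induction_on with
  | C a =>
    simp only [eval_C]
    refine (hasFDerivAt_const a x).congr_fderiv ?_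
    ext v
    simp
  | add f g hf hg =>
    simp only [eval_add]
    refine (hf.add hg).congr_fderiv ?_
    ext v
    simp [add_mul, Finset.sum_add_distrib]
  | mul_X f k hf =>
    have h := hf.mul (hasFDerivAt_apply k x)
    simp only [eval_mul, eval_X]
    refine h.congr_fderiv ?_
    ext v
    simp [pderiv_X, Pi.single_apply, add_mul, Finset.sum_add_distrib, Finset.mul_sum,
      apply_ite (eval x), mul_assoc]

theorem fderiv_eval_apply_single [DecidableEq σ] (r : MvPolynomial σ 𝕜) (x : σ → 𝕜) (j : σ) :
    fderiv 𝕜 (eval · r) x (Pi.single j 1) = eval x (pderiv j r) := by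
  simp [(hasFDerivAt_eval r x).fderiv, Pi.single_apply]

end Calculus

variable {σ R : Type*} [CommSemiring R]

theorem constantCoeff_eq_zero_of_one_lt_degree {r : MvPolynomial σ R}
    (hr : ∀ m ∈ r.support, 1 < m.degree) : constantCoeff r = 0 := by
  by_contra h
  simpa using hr 0 (mem_support_iff.2 h)

theorem constantCoeff_pderiv_eq_zero_of_one_lt_degree {r : MvPolynomial σ R}
    (hr : ∀ m ∈ r.support, 1 < m.degree) (i : σ) : constantCoeff (pderiv i r) = 0 := by
  rw [constantCoeff_eq, coeff_pderiv, zero_add, notMem_support_iff.1 fun h => ?_, zero_mul]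
  simpa using hr _ h

end MvPolynomial

theorem Complex.re_neg_of_sq_sub_mul_add_eq_zero {t d : ℝ} (ht : t < 0) (hd : 0 < d) {z : ℂ}
    (hz : z ^ 2 - t * z + d = 0) : z.re < 0 := by
  have hre := congrArg re hz
  have him := congrArg im hz
  simp only [sq, add_re, sub_re, mul_re, ofReal_re, ofReal_im, zero_re, add_im, sub_im, mul_im,
    zero_im] at hre him
  rcases eq_or_ne z.im 0 with hy | hy
  · rw [hy] at hre
    by_contra! hx
    nlinarith
  · have : 2 * z.re = t := mul_right_cancel₀ hy (by linarith)
    linarith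

theorem Matrix.re_neg_of_mem_spectrum_map_ofReal {A : Matrix (Fin 2) (Fin 2) ℝ}
    (htr : A.trace < 0) (hdet : 0 < A.det) {z : ℂ} (hz : z ∈ spectrum ℂ (A.map ((↑) : ℝ → ℂ))) :
    z.re < 0 := by
  rw [Matrix.mem_spectrum_iff_isRoot_charpoly, Matrix.charpoly_fin_two] at hz
  refine Complex.re_neg_of_sq_sub_mul_add_eq_zero htr hdet ?_
  simpa [Matrix.trace_fin_two, Matrix.det_fin_two] using hz

theorem jacMatrix_eval (P : Fin 2 → MvPolynomial (Fin 2) ℝ) (x : Fin 2 → ℝ) :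
    jacMatrix (fun v i => eval v (P i)) x = Matrix.of fun i j => eval x (pderiv j (P i)) := by
  ext i j
  rw [jacMatrix, fderiv_pi fun i => (hasFDerivAt_eval (P i) x).differentiableAt]
  simp [fderiv_eval_apply_single]

theorem stmt14
    (GAS : ∀ F : (Fin 2 → ℝ) → (Fin 2 → ℝ), ContDiff ℝ 1 F → F 0 = 0 →
      (∀ x : Fin 2 → ℝ, ∀ z ∈ spectrum ℂ ((jacMatrix F x).map (Complex.ofReal ·)),
        z.re < 0) →
      Function.Injective F)
    (p q : MvPolynomial (Fin 2) ℝ)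
    (hp : ∀ m ∈ p.support, 1 < m 0 + m 1)
    (hq : ∀ m ∈ q.support, 1 < m 0 + m 1)
    (hconst : ∃ c : ℝ,
      (1 + pderiv 0 p) * (1 + pderiv 1 q) - pderiv 1 p * pderiv 0 q = C c)
    (htr : ∀ x : Fin 2 → ℝ, 0 ≤ eval x (pderiv 0 p + pderiv 1 q)) :
    Function.Injective (fun v : Fin 2 → ℝ => ![v 0 + eval v p, v 1 + eval v q]) := by
  obtain ⟨c, hc⟩ := hconst
  have hp' : ∀ m ∈ p.support, 1 < m.degree := by simpa [Finsupp.degree_eq_sum] using hp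
  have hq' : ∀ m ∈ q.support, 1 < m.degree := by simpa [Finsupp.degree_eq_sum] using hq
  have hdet : ∀ x : Fin 2 → ℝ, (1 + eval x (pderiv 0 p)) * (1 + eval x (pderiv 1 q))
      - eval x (pderiv 1 p) * eval x (pderiv 0 q) = 1 := by
    have hdet_eq_c (x : Fin 2 → ℝ) := by simpa using congrArg (eval x) hc
    have hc1 : c = 1 := by
      simpa [eval_zero, constantCoeff_pderiv_eq_zero_of_one_lt_degree hp',
        constantCoeff_pderiv_eq_zero_of_one_lt_degree hq'] using (hdet_eq_c 0).symm
    simpa [hc1] using hdet_eq_c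
  set P : Fin 2 → MvPolynomial (Fin 2) ℝ := ![-(X 0 + p), -(X 1 + q)]
  have hP : (fun v i => eval v (P i))
      = Neg.neg ∘ fun v : Fin 2 → ℝ => ![v 0 + eval v p, v 1 + eval v q] := by
    ext v i
    fin_cases i <;> simp [P, add_comm]
  suffices hF : Function.Injective (fun v i => eval v (P i)) from (hP ▸ hF).of_comp
  refine GAS _ ?_ ?_ ?_
  · exact contDiff_pi.2 fun i => (AnalyticOnNhd.eval_mvPolynomial (P i)).contDiff
  · ext i
    fin_cases i <;> simp [P, eval_zero, constantCoeff_eq_zero_of_one_lt_degree hp',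
      constantCoeff_eq_zero_of_one_lt_degree hq']
  · intro x z hz
    refine Matrix.re_neg_of_mem_spectrum_map_ofReal ?_ ?_ (jacMatrix_eval P x ▸ hz)
    · have := htr x
      simp [Matrix.trace_fin_two, P, pderiv_X] at this ⊢
      linarith
    · have := hdet x
      simp [Matrix.det_fin_two, P, pderiv_X] at this ⊢
      linarith
end
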